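/- arXiv:2507.12863 — 4 statements merged into one kernel-verified Lean document; each statement's English description precedes it below -/
import Mathlib

section
/- Let H, λ ∈ ℝ. If a real number κ satisfies both 2x² + R₁(κ) = 0 and 2H·x² + R₂(κ) = 0 for some x ∈ ℝ, where R₁(κ) = (2H² - 2Hκ + κ²)λ - κ²(2H - κ)² and R₂(κ) = κλ(2H² - 4Hκ + 3κ²) + κ²(2H - 3κ)(2H - κ)², then (2H² - 3Hκ + κ²)·(λ(-2H² + 2Hκ - 3κ²) + 3κ²(κ - 2H)²) = 0. -/
/-- Elimination step in Theorem 1: if `2x² + R₁ = 0` and `2Hx² + R₂ = 0`, then the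
stated polynomial factorization in `κ` holds. -/
theorem translating_elimination (H lam κ x : ℝ)
    (h1 : 2 * x ^ 2 + ((2 * H ^ 2 - 2 * H * κ + κ ^ 2) * lam
      - κ ^ 2 * (2 * H - κ) ^ 2) = 0)
    (h2 : 2 * H * x ^ 2 + (κ * lam * (2 * H ^ 2 - 4 * H * κ + 3 * κ ^ 2)
      + κ ^ 2 * (2 * H - 3 * κ) * (2 * H - κ) ^ 2) = 0) :
    (2 * H ^ 2 - 3 * H * κ + κ ^ 2)
      * (lam * (-2 * H ^ 2 + 2 * H * κ - 3 * κ ^ 2)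
        + 3 * κ ^ 2 * (κ - 2 * H) ^ 2) = 0 := by
  linear_combination (κ - 2 * H) * (H * h1 - h2)
end

section
/- Let Φ: Σ → ℝ³ be an immersion satisfying the λ-shrinker equation K = α⟨N, Φ⟩ + λ with α ≠ 0, and suppose K is constant on Σ and both principal curvatures are non-constant near some point. Then in principal coordinates the tangential part Φ^⊤ = γe₁ + μe₂ of the position vector satisfies γ = μ = 0, and the structure equation e₁(γ) - μω(e₁) - ((K - λ)/α)κ₁ = 1 forces ((K - λ)/α)κ₁ = -1, so κ₁ = -α/(K - λ) is constant — a contradiction. -/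
/-- λ-shrinker with constant Gauss curvature and non-constant, non-vanishing
principal curvatures: the structure equations force `γ = μ = 0`, then
`((K - λ)/α)κ₁ = -1`, so `κ₁` would be constant — a contradiction. -/
theorem shrinker_constant_K_contradiction (M : Type*) (α lam : ℝ) (hα : α ≠ 0)
    (γ μ κ₁ κ₂ K e₁K e₂K e₁γ ωe₁ : M → ℝ)
    (hK : ∀ p, K p = κ₁ p * κ₂ p)
    (hKconst : ∀ p q, K p = K q)
    (he₁K : ∀ p, e₁K p = 0) (he₂K : ∀ p, e₂K p = 0)
    (heq5 : ∀ p, e₁K p / α + γ p * κ₁ p = 0)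
    (heq6 : ∀ p, e₂K p / α + μ p * κ₂ p = 0)
    (hκ₁ : ∀ p, κ₁ p ≠ 0) (hκ₂ : ∀ p, κ₂ p ≠ 0)
    (he₁γ : (∀ p, γ p = 0) → ∀ p, e₁γ p = 0)
    (heq1 : ∀ p, e₁γ p - μ p * ωe₁ p - ((K p - lam) / α) * κ₁ p = 1)
    (hnonconst : ∃ p q, κ₁ p ≠ κ₁ q) :
    (∀ p, γ p = 0 ∧ μ p = 0) ∧ (∀ p, ((K p - lam) / α) * κ₁ p = -1) ∧ False := by
  have hγ : ∀ p, γ p = 0 := by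
    intro p
    have h := heq5 p
    rw [he₁K p] at h
    have : γ p * κ₁ p = 0 := by simpa using h
    rcases mul_eq_zero.1 this with h' | h'
    · exact h'
    · exact absurd h' (hκ₁ p)
  have hμ : ∀ p, μ p = 0 := by
    intro p
    have h := heq6 p
    rw [he₂K p] at h
    have : μ p * κ₂ p = 0 := by simpa using h
    rcases mul_eq_zero.1 this with h' | h'
    · exact h'
    · exact absurd h' (hκ₂ p)
  have he₁γ0 := he₁γ hγ
  have key : ∀ p, ((K p - lam) / α) * κ₁ p = -1 := by
    intro p
    have h := heq1 p
    rw [he₁γ0 p, hμ p] at h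
    linarith
  refine ⟨fun p => ⟨hγ p, hμ p⟩, key, ?_⟩
  obtain ⟨p, q, hpq⟩ := hnonconst
  apply hpq
  have hp := key p
  have hq := key q
  rw [hKconst p q] at hp
  have hc : (K q - lam) / α ≠ 0 := by
    intro h0
    rw [h0] at hp; simp at hp
  have hc' : K q - lam ≠ 0 := fun h0 => hc (by rw [h0]; simp)
  field_simp at hp hq
  exact mul_left_cancel₀ hc' (hp.trans hq.symm)
end

section
/- Let I be an interval and let c ∈ ℝ \ {0}, α, λ ∈ ℝ be constants. Then any C² function κ: I → ℝ with κ'(t) ≠ 0 on I satisfying the system κ'' = -(κc - λ)c - α and 2(κ')² = -(κ - c)(κ²c + α - λc) satisfies a non-trivial polynomial identity in κ with constant coefficients; hence no such solution exists on any interval. -/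
/-- ODE reduction for λ-shrinkers with constant principal curvature `κ₂ = c ≠ 0`:
there is no `C²` solution `κ` with nonvanishing derivative of the system
`κ'' = -(cκ - λ)c - α` and `2(κ')² = -(κ - c)(cκ² + α - λc)` on any interval. -/
theorem shrinker_ode_no_solution (c lam α : ℝ) (hc : c ≠ 0) (a b : ℝ) (hab : a < b)
    (κ : ℝ → ℝ) (hκ : ContDiffOn ℝ 2 κ (Set.Ioo a b))
    (hd : ∀ t ∈ Set.Ioo a b, deriv κ t ≠ 0)
    (h1 : ∀ t ∈ Set.Ioo a b, deriv (deriv κ) t = -(c * κ t - lam) * c - α)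
    (h2 : ∀ t ∈ Set.Ioo a b,
      2 * (deriv κ t) ^ 2 = -(κ t - c) * (c * (κ t) ^ 2 + α - lam * c)) :
    False := by
  have hopen : IsOpen (Set.Ioo a b) := isOpen_Ioo
  have hκd : DifferentiableOn ℝ κ (Set.Ioo a b) := hκ.differentiableOn two_ne_zero
  have hκ'd : DifferentiableOn ℝ (deriv κ) (Set.Ioo a b) :=
    (hκ.deriv_of_isOpen (m := 1) hopen (by norm_num)).differentiableOn one_ne_zero
  -- Step 1: quadratic identity  c κ² - 2c² κ = α - λ c  on the interval
  have quad : ∀ t ∈ Set.Ioo a b, c * (κ t) ^ 2 - 2 * c ^ 2 * κ t = α - lam * c := by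
    intro t ht
    have hκt : HasDerivAt κ (deriv κ t) t :=
      (hκd.differentiableAt (hopen.mem_nhds ht)).hasDerivAt
    have hκ't : HasDerivAt (deriv κ) (deriv (deriv κ) t) t :=
      (hκ'd.differentiableAt (hopen.mem_nhds ht)).hasDerivAt
    have hL : HasDerivAt (fun s => 2 * (deriv κ s) ^ 2)
        (4 * deriv κ t * deriv (deriv κ) t) t := by
      have := (hκ't.fun_pow 2).const_mul (2 : ℝ)
      exact this.congr_deriv (by push_cast; ring)
    have hR : HasDerivAt (fun s => -(κ s - c) * (c * (κ s) ^ 2 + α - lam * c))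
        (-(deriv κ t) * (c * (κ t) ^ 2 + α - lam * c)
          + -(κ t - c) * (c * (2 * κ t ^ 1 * deriv κ t))) t := by
      exact ((hκt.sub_const c).neg).mul
        ((((hκt.pow 2).const_mul c).add_const α).sub_const (lam * c))
    have heq : (fun s => 2 * (deriv κ s) ^ 2)
        =ᶠ[nhds t] (fun s => -(κ s - c) * (c * (κ s) ^ 2 + α - lam * c)) :=
      Filter.eventuallyEq_of_mem (hopen.mem_nhds ht) (fun s hs => h2 s hs)
    have hR' : HasDerivAt (fun s => 2 * (deriv κ s) ^ 2)
        (-(deriv κ t) * (c * (κ t) ^ 2 + α - lam * c)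
          + -(κ t - c) * (c * (2 * κ t ^ 1 * deriv κ t))) t :=
      hR.congr_of_eventuallyEq heq
    have hder := hL.unique hR'
    have h1t := h1 t ht
    have hdt := hd t ht
    have hmain : deriv κ t * (4 * deriv (deriv κ) t) =
        deriv κ t * (-(c * (κ t) ^ 2 + α - lam * c) + -(κ t - c) * (c * (2 * κ t))) := by
      rw [show (κ t) ^ 1 = κ t from pow_one _] at hder
      nlinarith [hder]
    have hcancel := mul_left_cancel₀ hdt hmain
    rw [h1t] at hcancel
    nlinarith [hcancel]
  -- Step 2: differentiate the quadratic identity to get κ = c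
  have keq : ∀ t ∈ Set.Ioo a b, κ t = c := by
    intro t ht
    have hκt : HasDerivAt κ (deriv κ t) t :=
      (hκd.differentiableAt (hopen.mem_nhds ht)).hasDerivAt
    have hQ : HasDerivAt (fun s => c * (κ s) ^ 2 - 2 * c ^ 2 * κ s)
        (c * (2 * κ t ^ 1 * deriv κ t) - 2 * c ^ 2 * deriv κ t) t :=
      ((hκt.pow 2).const_mul c).sub (hκt.const_mul (2 * c ^ 2))
    have heq : (fun s => c * (κ s) ^ 2 - 2 * c ^ 2 * κ s)
        =ᶠ[nhds t] (fun _ => α - lam * c) :=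
      Filter.eventuallyEq_of_mem (hopen.mem_nhds ht) (fun s hs => quad s hs)
    have hQ' : HasDerivAt (fun _ : ℝ => α - lam * c)
        (c * (2 * κ t ^ 1 * deriv κ t) - 2 * c ^ 2 * deriv κ t) t :=
      hQ.congr_of_eventuallyEq heq.symm
    have h0 : c * (2 * κ t ^ 1 * deriv κ t) - 2 * c ^ 2 * deriv κ t = 0 :=
      hQ'.unique (hasDerivAt_const t _)
    rw [pow_one] at h0
    have h0' : 2 * c * deriv κ t * (κ t - c) = 0 := by ring_nf; linarith [h0]
    rcases mul_eq_zero.1 h0' with h | h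
    · rcases mul_eq_zero.1 h with h' | h'
      · rcases mul_eq_zero.1 h' with h'' | h''
        · norm_num at h''
        · exact absurd h'' hc
      · exact absurd h' (hd t ht)
    · linarith
  -- Step 3: κ is locally constant, so deriv κ = 0, contradiction
  set t₀ := (a + b) / 2 with ht₀def
  have ht₀ : t₀ ∈ Set.Ioo a b := ⟨by simp [ht₀def]; linarith, by simp [ht₀def]; linarith⟩
  have hconst : κ =ᶠ[nhds t₀] (fun _ => c) :=
    Filter.eventuallyEq_of_mem (hopen.mem_nhds ht₀) (fun s hs => keq s hs)
  have : deriv κ t₀ = 0 := by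
    rw [hconst.deriv_eq, deriv_const]
  exact hd t₀ ht₀ this
end

section
/- Suppose μ, κ: I → ℝ are C¹ functions on an interval with κ > 0, κ' ≠ 0, μ' = 1, and (κ'/κ)·μ + (λ/α)·κ = 1 for constants λ, α with α ≠ 0. If additionally κ''/κ - 2(κ'/κ)² = 0 (flat Gauss equation), then differentiating the constraint leads to (κ'/κ²)·μ + 1/κ + λ/α = 0, which together with the original constraint gives a contradiction (it would force 1 = 0 after combining with the relation κ' μ/κ = 1 - λκ/α). Hence no such pair (μ, κ) exists. -/
/-- ODE reduction for λ-shrinkers with `κ₂ = 0`: there are no functions `μ, κ` on an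
interval with `κ > 0`, `κ' ≠ 0`, `μ' = 1`, satisfying `(κ'/κ)μ + (λ/α)κ = 1` and the
flatness condition `κ''/κ - 2(κ'/κ)² = 0`. -/
theorem shrinker_flat_case_no_solution (lam α : ℝ) (hα : α ≠ 0) (a b : ℝ)
    (hab : a < b) (μ κ : ℝ → ℝ)
    (hμ : ContDiffOn ℝ 1 μ (Set.Ioo a b)) (hκ : ContDiffOn ℝ 2 κ (Set.Ioo a b))
    (hκpos : ∀ t ∈ Set.Ioo a b, 0 < κ t)
    (hd : ∀ t ∈ Set.Ioo a b, deriv κ t ≠ 0)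
    (hμ' : ∀ t ∈ Set.Ioo a b, deriv μ t = 1)
    (hcon : ∀ t ∈ Set.Ioo a b, (deriv κ t / κ t) * μ t + (lam / α) * κ t = 1)
    (hflat : ∀ t ∈ Set.Ioo a b,
      deriv (deriv κ) t / κ t - 2 * (deriv κ t / κ t) ^ 2 = 0) :
    False := by
  have hopen : IsOpen (Set.Ioo a b) := isOpen_Ioo
  set t₀ : ℝ := (a + b) / 2 with ht₀def
  have ht₀ : t₀ ∈ Set.Ioo a b := ⟨by simp [ht₀def]; linarith, by simp [ht₀def]; linarith⟩
  have hnhds : Set.Ioo a b ∈ nhds t₀ := hopen.mem_nhds ht₀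
  -- derivatives at t₀
  have hμdiff : DifferentiableOn ℝ μ (Set.Ioo a b) := hμ.differentiableOn one_ne_zero
  have hκdiff : DifferentiableOn ℝ κ (Set.Ioo a b) :=
    hκ.differentiableOn (by norm_num)
  have hκ' : ContDiffOn ℝ 1 (deriv κ) (Set.Ioo a b) := by
    exact hκ.deriv_of_isOpen (m := 1) hopen (by norm_num)
  have hκ'diff : DifferentiableOn ℝ (deriv κ) (Set.Ioo a b) := hκ'.differentiableOn one_ne_zero
  set k := κ t₀
  set k' := deriv κ t₀
  set k'' := deriv (deriv κ) t₀
  set m := μ t₀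
  have hkpos : 0 < k := hκpos t₀ ht₀
  have hk'ne : k' ≠ 0 := hd t₀ ht₀
  have hμat : HasDerivAt μ 1 t₀ := by
    have := (hμdiff.differentiableAt hnhds).hasDerivAt
    rwa [hμ' t₀ ht₀] at this
  have hκat : HasDerivAt κ k' t₀ := (hκdiff.differentiableAt hnhds).hasDerivAt
  have hκ'at : HasDerivAt (deriv κ) k'' t₀ := (hκ'diff.differentiableAt hnhds).hasDerivAt
  -- derivative of the constraint function
  have hF : HasDerivAt (fun t => (deriv κ t / κ t) * μ t + (lam / α) * κ t)
      ((k'' * k - k' * k') / k ^ 2 * m + (k' / k) * 1 + (lam / α) * k') t₀ := by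
    exact (((hκ'at.div hκat hkpos.ne').mul hμat).add (hκat.const_mul (lam / α)))
  -- the constraint function is constantly 1 near t₀
  have hFeq : (fun t => (deriv κ t / κ t) * μ t + (lam / α) * κ t) =ᶠ[nhds t₀]
      (fun _ => (1 : ℝ)) := by
    filter_upwards [hnhds] with t ht using hcon t ht
  have hconst : HasDerivAt (fun _ : ℝ => (1 : ℝ))
      ((k'' * k - k' * k') / k ^ 2 * m + (k' / k) * 1 + (lam / α) * k') t₀ :=
    hF.congr_of_eventuallyEq hFeq.symm
  have hD : (k'' * k - k' * k') / k ^ 2 * m + (k' / k) * 1 + (lam / α) * k' = 0 := by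
    have := hconst.deriv
    rw [deriv_const] at this
    exact this.symm
  -- flatness and constraint at t₀
  have hflat0 : k'' / k - 2 * (k' / k) ^ 2 = 0 := hflat t₀ ht₀
  have hcon0 : (k' / k) * m + (lam / α) * k = 1 := hcon t₀ ht₀
  have hkne : k ≠ 0 := hkpos.ne'
  have hk2 : k'' * k = 2 * k' ^ 2 := by
    have h : (k'' * k - 2 * k' ^ 2) * k = 0 := by
      field_simp at hflat0
      nlinarith [hflat0]
    rcases mul_eq_zero.mp h with h' | h'
    · linarith
    · exact absurd h' hkne
  have hD' : k' * k' / k ^ 2 * m + k' / k + (lam / α) * k' = 0 := by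
    rw [hk2] at hD
    linear_combination hD
  have h1 : (k' * k' * m * k + k' * k ^ 2) * α + lam * k' * k ^ 3 = 0 := by
    field_simp at hD'
    linear_combination k * hD'
  have h2 : (k' * k) * (k' * m * α + k * α + lam * k ^ 2) = 0 := by
    linear_combination h1
  have h3 : k' * m * α + k * α + lam * k ^ 2 = 0 :=
    (mul_eq_zero.mp h2).resolve_left (mul_ne_zero hk'ne hkne)
  have hc : k' * m * α + lam * k * k = k * α := by
    field_simp at hcon0
    linarith [hcon0]
  have hz : k * α = 0 := by nlinarith [h3, hc]
  exact absurd hz (mul_ne_zero hkne hα)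
end
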